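/- Let R = R(F,2,0) be the Leibniz algebra with basis {x, y, e_1, e_2, ...} and nonzero products [e_i, e_1] = e_{i+1} (i ≥ 2), [e_1, x] = e_1, [x, e_1] = -e_1, [e_i, x] = (i-2)e_i (i ≥ 2), [e_i, y] = e_i (i ≥ 2). Then every derivation of R is inner: for each derivation d of R there exists a in R such that d(v) = [v, a] for all v in R. -/

import Mathlib

noncomputable section

/-- The underlying space; coordinate 0 is `x`, coordinate 1 is `y`, and
coordinate `n ≥ 2` is the basis vector `e_{n-1}` (so `e_i = single (i+1)`). -/
abbrev V : Type := ℕ →₀ ℂ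

/-- `e_i ↦ e_{i+1}` for `i ≥ 2` (`single n ↦ single (n+1)` for `n ≥ 3`), else 0. -/
def T : V →ₗ[ℂ] V :=
  Finsupp.lsum ℂ fun n => if 3 ≤ n then (Finsupp.lsingle (n + 1) : ℂ →ₗ[ℂ] V) else 0

/-- Right multiplication by `x`: `e_1 ↦ e_1`, `e_i ↦ (i-2) e_i` for `i ≥ 2`. -/
def A : V →ₗ[ℂ] V :=
  Finsupp.lsum ℂ fun n =>
    (if n = 2 then (1 : ℂ) else if 3 ≤ n then (n : ℂ) - 3 else 0) • Finsupp.lsingle n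

/-- Right multiplication by `y`: `e_i ↦ e_i` for `i ≥ 2`, else 0. -/
def B : V →ₗ[ℂ] V :=
  Finsupp.lsum ℂ fun n => if 3 ≤ n then (Finsupp.lsingle n : ℂ →ₗ[ℂ] V) else 0

/-- Bracket of `R(F,2,0)`: nonzero products `[e_i,e_1] = e_{i+1}` (i ≥ 2),
`[e_1,x] = e_1`, `[x,e_1] = -e_1`, `[e_i,x] = (i-2)e_i` (i ≥ 2), `[e_i,y] = e_i` (i ≥ 2). -/
def brR (f g : V) : V :=
  g 2 • T f + g 0 • A f + g 1 • B f - (f 0 * g 2) • Finsupp.single 2 (1 : ℂ)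

def cA (n : ℕ) : ℂ := if n = 2 then 1 else if 3 ≤ n then (n : ℂ) - 3 else 0

lemma T_apply' (f : V) (m : ℕ) : T f m = if 4 ≤ m then f (m-1) else 0 := by
  rw [T, Finsupp.lsum_apply, Finsupp.sum_apply]
  have : ∀ n (c : ℂ), ((if 3 ≤ n then (Finsupp.lsingle (n + 1) : ℂ →ₗ[ℂ] V) else 0) c) m
      = if n = m - 1 ∧ 4 ≤ m then c else 0 := by
    intro n c
    split_ifs with h1 h2 h2
    · rw [Finsupp.lsingle_apply, Finsupp.single_apply, if_pos (by omega)]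
    · rw [Finsupp.lsingle_apply, Finsupp.single_apply, if_neg (by omega)]
    · exact absurd (by omega : 3 ≤ n) h1
    · simp
  simp only [this]
  rw [Finsupp.sum]
  by_cases hm : 4 ≤ m
  · simp only [hm, and_true]
    rw [Finset.sum_ite_eq' f.support (m-1) (fun n => f n)]
    split_ifs with h
    · rfl
    · simp [Finsupp.notMem_support_iff.mp h]
  · simp [hm]

lemma A_apply' (f : V) (m : ℕ) : A f m = cA m * f m := by
  rw [A, Finsupp.lsum_apply, Finsupp.sum_apply]
  have : ∀ (n : ℕ) (c : ℂ),
      (((if n = 2 then (1:ℂ) else if 3 ≤ n then (n : ℂ) - 3 else 0) • (Finsupp.lsingle n : ℂ →ₗ[ℂ] V)) c) m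
      = if n = m then cA n * c else 0 := by
    intro n c
    rw [LinearMap.smul_apply, Finsupp.lsingle_apply, Finsupp.smul_single, Finsupp.single_apply]
    simp only [cA, smul_eq_mul] <;> split_ifs <;> simp
  simp only [this]
  rw [Finsupp.sum]
  rw [Finset.sum_ite_eq' f.support m (fun n => cA n * f n)]
  split_ifs with h
  · rfl
  · simp [Finsupp.notMem_support_iff.mp h]

lemma B_apply' (f : V) (m : ℕ) : B f m = if 3 ≤ m then f m else 0 := by
  rw [B, Finsupp.lsum_apply, Finsupp.sum_apply]
  have : ∀ n (c : ℂ), ((if 3 ≤ n then (Finsupp.lsingle n : ℂ →ₗ[ℂ] V) else 0) c) m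
      = if n = m then (if 3 ≤ m then c else 0) else 0 := by
    intro n c
    split_ifs with h1 h2 h2 <;>
      simp_all [Finsupp.lsingle_apply, Finsupp.single_apply] <;> omega
  simp only [this]
  rw [Finsupp.sum]
  rw [Finset.sum_ite_eq' f.support m (fun n => if 3 ≤ m then f n else 0)]
  split_ifs with h h3
  · rfl
  · rfl
  · simp [Finsupp.notMem_support_iff.mp h]
  · rfl

lemma brR_apply (f g : V) (m : ℕ) :
    brR f g m = g 2 * (if 4 ≤ m then f (m-1) else 0) + g 0 * (cA m * f m)
      + g 1 * (if 3 ≤ m then f m else 0) - f 0 * g 2 * (if 2 = m then 1 else 0) := by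
  rw [brR, Finsupp.sub_apply, Finsupp.add_apply, Finsupp.add_apply, Finsupp.smul_apply,
      Finsupp.smul_apply, Finsupp.smul_apply, Finsupp.smul_apply,
      T_apply', A_apply', B_apply', Finsupp.single_apply]
  simp only [smul_eq_mul] <;> ring

lemma single_eval (p m : ℕ) : (Finsupp.single p (1:ℂ)) m = if p = m then 1 else 0 :=
  Finsupp.single_apply

lemma T_single (n : ℕ) (c : ℂ) :
    T (Finsupp.single n c) = if 3 ≤ n then Finsupp.single (n+1) c else 0 := by
  rw [T, Finsupp.lsum_single]; split_ifs <;> simp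

lemma A_single (n : ℕ) (c : ℂ) : A (Finsupp.single n c) = cA n • Finsupp.single n c := by
  rw [A, Finsupp.lsum_single, LinearMap.smul_apply, Finsupp.lsingle_apply, cA]

lemma B_single (n : ℕ) (c : ℂ) :
    B (Finsupp.single n c) = if 3 ≤ n then Finsupp.single n c else 0 := by
  rw [B, Finsupp.lsum_single]; split_ifs <;> simp

lemma cA3 (n : ℕ) (hn : 3 ≤ n) : cA n = (n:ℂ) - 3 := by
  rw [cA, if_neg (by omega), if_pos hn]

lemma e00 : brR (Finsupp.single 0 (1:ℂ)) (Finsupp.single 0 1) = 0 := by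
  rw [brR, T_single, A_single, B_single]
  simp [Finsupp.single_apply, cA]
lemma e01 : brR (Finsupp.single 0 (1:ℂ)) (Finsupp.single 1 1) = 0 := by
  rw [brR, T_single, A_single, B_single]
  simp [Finsupp.single_apply, cA]
lemma e02 : brR (Finsupp.single 0 (1:ℂ)) (Finsupp.single 2 1) = -(Finsupp.single 2 1) := by
  rw [brR, T_single, A_single, B_single]
  simp [Finsupp.single_apply, cA]
lemma e10 : brR (Finsupp.single 1 (1:ℂ)) (Finsupp.single 0 1) = 0 := by
  rw [brR, T_single, A_single, B_single]
  simp [Finsupp.single_apply, cA]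
lemma e11 : brR (Finsupp.single 1 (1:ℂ)) (Finsupp.single 1 1) = 0 := by
  rw [brR, T_single, A_single, B_single]
  simp [Finsupp.single_apply, cA]
lemma e12 : brR (Finsupp.single 1 (1:ℂ)) (Finsupp.single 2 1) = 0 := by
  rw [brR, T_single, A_single, B_single]
  simp [Finsupp.single_apply, cA]
lemma e20 : brR (Finsupp.single 2 (1:ℂ)) (Finsupp.single 0 1) = Finsupp.single 2 1 := by
  rw [brR, T_single, A_single, B_single]
  simp [Finsupp.single_apply, cA]
lemma e21 : brR (Finsupp.single 2 (1:ℂ)) (Finsupp.single 1 1) = 0 := by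
  rw [brR, T_single, A_single, B_single]
  simp [Finsupp.single_apply, cA]
lemma e22 : brR (Finsupp.single 2 (1:ℂ)) (Finsupp.single 2 1) = 0 := by
  rw [brR, T_single, A_single, B_single]
  simp [Finsupp.single_apply, cA]

lemma coord0 (n : ℕ) (hn : 3 ≤ n) : (Finsupp.single n (1:ℂ)) 0 = 0 :=
  Finsupp.single_eq_of_ne (by omega)
lemma coord1 (n : ℕ) (hn : 3 ≤ n) : (Finsupp.single n (1:ℂ)) 1 = 0 :=
  Finsupp.single_eq_of_ne (by omega)
lemma coord2 (n : ℕ) (hn : 3 ≤ n) : (Finsupp.single n (1:ℂ)) 2 = 0 :=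
  Finsupp.single_eq_of_ne (by omega)

lemma en0 (n : ℕ) (hn : 3 ≤ n) :
    brR (Finsupp.single n (1:ℂ)) (Finsupp.single 0 1) = ((n:ℂ)-3) • Finsupp.single n 1 := by
  rw [brR, T_single, if_pos hn, A_single, B_single, if_pos hn, cA3 n hn,
    coord0 n hn]
  simp [Finsupp.single_apply]
lemma en1 (n : ℕ) (hn : 3 ≤ n) :
    brR (Finsupp.single n (1:ℂ)) (Finsupp.single 1 1) = Finsupp.single n 1 := by
  rw [brR, T_single, if_pos hn, A_single, B_single, if_pos hn, coord0 n hn]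
  simp [Finsupp.single_apply]
lemma en2 (n : ℕ) (hn : 3 ≤ n) :
    brR (Finsupp.single n (1:ℂ)) (Finsupp.single 2 1) = Finsupp.single (n+1) 1 := by
  rw [brR, T_single, if_pos hn, A_single, B_single, if_pos hn, coord0 n hn]
  simp [Finsupp.single_apply]

lemma brR_add_left (f f' g : V) : brR (f + f') g = brR f g + brR f' g := by
  simp only [brR, map_add, Finsupp.add_apply]; module
lemma brR_smul_left (c : ℂ) (f g : V) : brR (c • f) g = c • brR f g := by
  simp only [brR, map_smul, Finsupp.smul_apply, smul_eq_mul]; module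
lemma brR_add_right (f g g' : V) : brR f (g + g') = brR f g + brR f g' := by
  simp only [brR, Finsupp.add_apply]; module
lemma brR_smul_right (c : ℂ) (f g : V) : brR f (c • g) = c • brR f g := by
  simp only [brR, Finsupp.smul_apply, smul_eq_mul]; module
lemma brR_zero_left (g : V) : brR 0 g = 0 := by
  simp [brR]

/-- Every derivation of `R(F,2,0)` is inner: it equals right multiplication by some
fixed element `a`. -/
theorem stmt15 (d : V →ₗ[ℂ] V)
    (hd : ∀ u v : V, d (brR u v) = brR (d u) v + brR u (d v)) :
    ∃ a : V, ∀ v : V, d v = brR v a := by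
  classical
  have key : ∀ (u v : V) (m : ℕ), d (brR u v) m = brR (d u) v m + brR u (d v) m := by
    intro u v m; rw [hd u v, Finsupp.add_apply]
  -- d(y) coordinates
  have hy3 : ∀ m, 3 ≤ m → d (Finsupp.single 1 1) m = 0 := by
    intro m hm
    have h := key (Finsupp.single 1 1) (Finsupp.single 1 1) m
    simp only [e11, map_zero, Finsupp.coe_zero, Pi.zero_apply, brR_apply] at h
    simp [single_eval, hm, cA, show ¬(2:ℕ) = m by omega, show (1:ℕ) ≠ m by omega,
      show (1:ℕ) ≠ m - 1 by omega] at h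
    exact h.symm
  have hy2 : d (Finsupp.single 1 1) 2 = 0 := by
    have h := key (Finsupp.single 1 1) (Finsupp.single 0 1) 2
    simp only [e10, map_zero, Finsupp.coe_zero, Pi.zero_apply, brR_apply] at h
    simp [single_eval, cA] at h
    first | exact h | exact h.symm | linear_combination h | linear_combination -h
  have hy0 : d (Finsupp.single 1 1) 0 = 0 := by
    have h := key (Finsupp.single 1 1) (Finsupp.single 2 1) 2
    simp only [e12, map_zero, Finsupp.coe_zero, Pi.zero_apply, brR_apply] at h
    simp [single_eval, cA] at h
    first | exact h | exact h.symm | linear_combination h | linear_combination -h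
  -- d(x) coordinates
  have hx4 : ∀ m, 4 ≤ m → d (Finsupp.single 0 1) m = 0 := by
    intro m hm
    have h := key (Finsupp.single 0 1) (Finsupp.single 0 1) m
    simp only [e00, map_zero, Finsupp.coe_zero, Pi.zero_apply, brR_apply] at h
    simp [single_eval, hm, cA, show ¬m = 2 by omega, show (0:ℕ) ≠ m by omega,
      show ¬(2:ℕ) = m by omega, show (0:ℕ) ≠ m - 1 by omega, show 3 ≤ m by omega] at h
    rcases h with h | h
    · exfalso
      exact absurd (Nat.cast_inj.mp (show (m:ℂ) = ((3:ℕ):ℂ) by push_cast; linear_combination h))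
        (by omega)
    · exact h
  have hx3 : d (Finsupp.single 0 1) 3 = 0 := by
    have h := key (Finsupp.single 0 1) (Finsupp.single 1 1) 3
    simp only [e01, map_zero, Finsupp.coe_zero, Pi.zero_apply, brR_apply] at h
    simp [single_eval, cA] at h
    first | exact h | exact h.symm | linear_combination h | linear_combination -h
  -- from [e1,x] = e1
  have hx0 : d (Finsupp.single 0 1) 0 = 0 := by
    have h := key (Finsupp.single 2 1) (Finsupp.single 0 1) 2
    simp only [e20, brR_apply] at h
    simp [single_eval, cA] at h
    first | exact h | exact h.symm | linear_combination h | linear_combination -h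
  have he2_0 : d (Finsupp.single 2 1) 0 = 0 := by
    have h := key (Finsupp.single 2 1) (Finsupp.single 0 1) 0
    simp only [e20, brR_apply] at h
    simp [single_eval, cA] at h
    first | exact h | exact h.symm | linear_combination h | linear_combination -h
  have he2_1 : d (Finsupp.single 2 1) 1 = 0 := by
    have h := key (Finsupp.single 2 1) (Finsupp.single 0 1) 1
    simp only [e20, brR_apply] at h
    simp [single_eval, cA] at h
    first | exact h | exact h.symm | linear_combination h | linear_combination -h
  have he2_3 : d (Finsupp.single 2 1) 3 = 0 := by
    have h := key (Finsupp.single 2 1) (Finsupp.single 0 1) 3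
    simp only [e20, brR_apply] at h
    simp [single_eval, cA] at h
    first | exact h | exact h.symm | linear_combination h | linear_combination -h
  have he2_5 : ∀ m, 5 ≤ m → d (Finsupp.single 2 1) m = 0 := by
    intro m hm
    have h := key (Finsupp.single 2 1) (Finsupp.single 0 1) m
    simp only [e20, brR_apply] at h
    simp [single_eval, hm, cA, show ¬m = 2 by omega, show (2:ℕ) ≠ m by omega,
      show ¬(2:ℕ) = m by omega, show (2:ℕ) ≠ m - 1 by omega, show 3 ≤ m by omega,
      show 4 ≤ m by omega] at h
    -- h : d s2 m = (m-3) * d s2 m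
    have h2 : ((m:ℂ) - 4) * d (Finsupp.single 2 1) m = 0 := by
      first | linear_combination h | linear_combination -h
    rcases mul_eq_zero.mp h2 with h3 | h3
    · exfalso
      have : (m:ℂ) = ((4:ℕ):ℂ) := by push_cast; linear_combination h3
      exact absurd (Nat.cast_inj.mp this) (by omega)
    · exact h3
  have he2_4 : d (Finsupp.single 2 1) 4 = 0 := by
    have h := key (Finsupp.single 0 1) (Finsupp.single 2 1) 4
    simp only [e02, map_neg, Finsupp.neg_apply, brR_apply] at h
    simp [single_eval, cA, hx3] at h
    first | exact h | exact h.symm | linear_combination h | linear_combination -h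
  -- d(y) 1 = 0, via [e2,y] = e2
  have hy1 : d (Finsupp.single 1 1) 1 = 0 := by
    have h := key (Finsupp.single 3 1) (Finsupp.single 1 1) 3
    simp only [en1 3 (by omega), brR_apply] at h
    simp [single_eval, cA] at h
    first | exact h | exact h.symm | linear_combination h | linear_combination -h
  have hdy : d (Finsupp.single 1 1) = 0 := by
    ext m
    rcases m with _ | _ | _ | m
    · simpa using hy0
    · simpa using hy1
    · simpa using hy2
    · simpa using hy3 (m+3) (by omega)
  -- from [e2, x] = 0
  have hx1 : d (Finsupp.single 0 1) 1 = 0 := by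
    have h := key (Finsupp.single 3 1) (Finsupp.single 0 1) 3
    simp only [show brR (Finsupp.single 3 (1:ℂ)) (Finsupp.single 0 1) = 0 by
        rw [en0 3 (by omega)]; norm_num, map_zero, Finsupp.coe_zero, Pi.zero_apply,
      brR_apply] at h
    simp [single_eval, cA] at h
    first | exact h | exact h.symm | linear_combination h | linear_combination -h
  have he3_4 : d (Finsupp.single 3 1) 4 = -(d (Finsupp.single 0 1) 2) := by
    have h := key (Finsupp.single 3 1) (Finsupp.single 0 1) 4
    simp only [show brR (Finsupp.single 3 (1:ℂ)) (Finsupp.single 0 1) = 0 by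
        rw [en0 3 (by omega)]; norm_num, map_zero, Finsupp.coe_zero, Pi.zero_apply,
      brR_apply] at h
    simp [single_eval, cA] at h
    first | exact h | exact h.symm | linear_combination h | linear_combination -h
  have he3_2 : d (Finsupp.single 3 1) 2 = 0 := by
    have h := key (Finsupp.single 3 1) (Finsupp.single 0 1) 2
    simp only [show brR (Finsupp.single 3 (1:ℂ)) (Finsupp.single 0 1) = 0 by
        rw [en0 3 (by omega)]; norm_num, map_zero, Finsupp.coe_zero, Pi.zero_apply,
      brR_apply] at h
    simp [single_eval, cA] at h
    first | exact h | exact h.symm | linear_combination h | linear_combination -h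
  have he3_5 : ∀ m, 5 ≤ m → d (Finsupp.single 3 1) m = 0 := by
    intro m hm
    have h := key (Finsupp.single 3 1) (Finsupp.single 0 1) m
    simp only [show brR (Finsupp.single 3 (1:ℂ)) (Finsupp.single 0 1) = 0 by
        rw [en0 3 (by omega)]; norm_num, map_zero, Finsupp.coe_zero, Pi.zero_apply,
      brR_apply] at h
    simp [single_eval, hm, cA, show ¬m = 2 by omega, show (3:ℕ) ≠ m by omega,
      show ¬(2:ℕ) = m by omega, show (3:ℕ) ≠ m - 1 by omega, show 3 ≤ m by omega,
      show 4 ≤ m by omega] at h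
    rcases h with h | h
    · exfalso
      have : (m:ℂ) = ((3:ℕ):ℂ) := by push_cast; linear_combination h
      exact absurd (Nat.cast_inj.mp this) (by omega)
    · exact h
  have he3_0 : d (Finsupp.single 3 1) 0 = 0 := by
    have h := key (Finsupp.single 3 1) (Finsupp.single 1 1) 0
    simp only [en1 3 (by omega), hdy, brR_apply] at h
    simp [single_eval, cA] at h
    first | exact h | exact h.symm | linear_combination h | linear_combination -h
  have he3_1 : d (Finsupp.single 3 1) 1 = 0 := by
    have h := key (Finsupp.single 3 1) (Finsupp.single 1 1) 1
    simp only [en1 3 (by omega), hdy, brR_apply] at h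
    simp [single_eval, cA] at h
    first | exact h | exact h.symm | linear_combination h | linear_combination -h
  -- vector reconstructions
  have hdx : d (Finsupp.single 0 1) = (d (Finsupp.single 0 1) 2) • Finsupp.single 2 1 := by
    ext m
    rw [Finsupp.smul_apply, single_eval]
    rcases m with _ | _ | _ | _ | m
    · simpa using hx0
    · simpa using hx1
    · simp
    · simpa using hx3
    · rw [if_neg (by omega)]
      simpa using hx4 (m+4) (by omega)
  have hde1 : d (Finsupp.single 2 1) = (d (Finsupp.single 2 1) 2) • Finsupp.single 2 1 := by
    ext m
    rw [Finsupp.smul_apply, single_eval]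
    rcases m with _ | _ | _ | _ | _ | m
    · simpa using he2_0
    · simpa using he2_1
    · simp
    · simpa using he2_3
    · simpa using he2_4
    · rw [if_neg (by omega)]
      simpa using he2_5 (m+5) (by omega)
  have hde3 : d (Finsupp.single 3 1) = (d (Finsupp.single 3 1) 3) • Finsupp.single 3 1
      + (-(d (Finsupp.single 0 1) 2)) • Finsupp.single 4 1 := by
    ext m
    rw [Finsupp.add_apply, Finsupp.smul_apply, Finsupp.smul_apply, single_eval, single_eval]
    rcases m with _ | _ | _ | _ | _ | m
    · simpa using he3_0
    · simpa using he3_1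
    · simpa using he3_2
    · simp
    · simpa using he3_4
    · rw [if_neg (by omega), if_neg (by omega)]
      simpa using he3_5 (m+5) (by omega)
  set a0 : ℂ := d (Finsupp.single 2 1) 2 with ha0
  set a1 : ℂ := d (Finsupp.single 3 1) 3 with ha1
  set a2 : ℂ := -(d (Finsupp.single 0 1) 2) with ha2
  -- induction on basis vectors e_{n-1}, n ≥ 3
  have hstep : ∀ n, 3 ≤ n → d (Finsupp.single n 1)
      = (a0 * ((n:ℂ) - 3) + a1) • Finsupp.single n 1 + a2 • Finsupp.single (n+1) 1 := by
    intro n hn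
    induction n, hn using Nat.le_induction with
    | base =>
      rw [hde3]
      norm_num
    | succ n hn ih =>
      have h := hd (Finsupp.single n 1) (Finsupp.single 2 1)
      rw [en2 n hn, ih, hde1] at h
      rw [brR_add_left, brR_smul_left, brR_smul_left, brR_smul_right,
        en2 n hn, en2 (n+1) (by omega)] at h
      rw [h]
      push_cast
      module
  -- the inner element
  refine ⟨a0 • Finsupp.single 0 1 + a1 • Finsupp.single 1 1 + a2 • Finsupp.single 2 1, ?_⟩
  have hbasis : ∀ n : ℕ, d (Finsupp.single n 1)
      = brR (Finsupp.single n 1)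
          (a0 • Finsupp.single 0 1 + a1 • Finsupp.single 1 1 + a2 • Finsupp.single 2 1) := by
    intro n
    rw [brR_add_right, brR_add_right, brR_smul_right, brR_smul_right, brR_smul_right]
    rcases n with _ | _ | _ | n
    · rw [e00, e01, e02, hdx]
      rw [ha2]
      module
    · rw [e10, e11, e12, hdy]
      simp
    · rw [e20, e21, e22, hde1, ha0]
      simp
    · rw [en0 (n+3) (by omega), en1 (n+3) (by omega), en2 (n+3) (by omega),
        hstep (n+3) (by omega)]
      push_cast
      module
  intro v
  induction v using Finsupp.induction_linear with
  | zero => simp [brR_zero_left]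
  | add f g hf hg => rw [map_add, brR_add_left, hf, hg]
  | single n c =>
    have hs : (Finsupp.single n c : V) = c • Finsupp.single n 1 := by
      rw [Finsupp.smul_single, smul_eq_mul, mul_one]
    rw [hs, map_smul, brR_smul_left, hbasis n]
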